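/- Let G be a MAG over V with a removable vertex X, and let H be the induced subgraph of G over V\{X}. For any path u lying entirely in H and any set W ⊆ V\{X}, the path u is m-connecting relative to W in G if and only if u is m-connecting relative to W in H. -/

import Mathlib

/-- A mixed graph with directed (`dir x y` : x → y), bidirected and undirected edges. -/
structure MixedGraph (V : Type*) where
  dir : V → V → Prop
  bi : V → V → Prop
  und : V → V → Prop
  bi_symm : ∀ x y, bi x y → bi y x
  und_symm : ∀ x y, und x y → und y x

namespace MixedGraph

variable {V : Type*}

def adj (G : MixedGraph V) (x y : V) : Prop :=
  G.dir x y ∨ G.dir y x ∨ G.bi x y ∨ G.und x y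

/-- There is an arrowhead at `y` on the edge between `x` and `y`. -/
def head (G : MixedGraph V) (x y : V) : Prop := G.dir x y ∨ G.bi x y

def pa (G : MixedGraph V) (x : V) : Set V := {y | G.dir y x}
def child (G : MixedGraph V) (x : V) : Set V := {y | G.dir x y}
def nbr (G : MixedGraph V) (x : V) : Set V := {y | G.und x y}
def spouse (G : MixedGraph V) (x : V) : Set V := {y | G.bi x y}

/-- `x` is an ancestor of `y` (every vertex is an ancestor of itself). -/
def anc (G : MixedGraph V) (x y : V) : Prop := Relation.ReflTransGen G.dir x y

def ancSet (G : MixedGraph V) (S : Set V) : Set V := {x | ∃ y ∈ S, G.anc x y}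

/-- The set of descendants of `x` (including `x` itself). -/
def desc (G : MixedGraph V) (x : V) : Set V := {y | G.anc x y}

/-- A path, encoded as a duplicate-free list of at least two vertices with
consecutive vertices adjacent. -/
def IsPath (G : MixedGraph V) (p : List V) : Prop :=
  p.Chain' G.adj ∧ p.Nodup ∧ 2 ≤ p.length

def IsPathBetween (G : MixedGraph V) (p : List V) (x y : V) : Prop :=
  G.IsPath p ∧ p.head? = some x ∧ p.getLast? = some y

/-- The vertex at (internal) position `i` of `p` is a collider: both incident
path edges have an arrowhead at it. -/
def ColliderAt (G : MixedGraph V) (p : List V) (i : ℕ) : Prop :=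
  ∃ a v c, p[i-1]? = some a ∧ p[i]? = some v ∧ p[i+1]? = some c ∧
    G.head a v ∧ G.head c v

/-- A collider path: every non-endpoint vertex is a collider. -/
def IsColliderPath (G : MixedGraph V) (p : List V) : Prop :=
  G.IsPath p ∧ ∀ i, 1 ≤ i → i + 1 < p.length → G.ColliderAt p i

/-- `p` is an m-connecting path between `x` and `y` relative to `Z`. -/
def MConn (G : MixedGraph V) (p : List V) (x y : V) (Z : Set V) : Prop :=
  G.IsPathBetween p x y ∧
  ∀ i v, 1 ≤ i → i + 1 < p.length → p[i]? = some v →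
    (G.ColliderAt p i → v ∈ G.ancSet ({x, y} ∪ Z)) ∧
    (¬ G.ColliderAt p i → v ∉ Z)

/-- `Z` m-separates `x` and `y` in `G`. -/
def MSep (G : MixedGraph V) (x y : V) (Z : Set V) : Prop :=
  ∀ p, ¬ G.MConn p x y Z

/-- Induced subgraph over a set `S` of vertices. -/
def induce (G : MixedGraph V) (S : Set V) : MixedGraph V where
  dir x y := G.dir x y ∧ x ∈ S ∧ y ∈ S
  bi x y := G.bi x y ∧ x ∈ S ∧ y ∈ S
  und x y := G.und x y ∧ x ∈ S ∧ y ∈ S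
  bi_symm := fun x y h => ⟨G.bi_symm x y h.1, h.2.2, h.2.1⟩
  und_symm := fun x y h => ⟨G.und_symm x y h.1, h.2.2, h.2.1⟩

/-- `X` is removable in `G`: the induced subgraph on the remaining vertices
imposes exactly the same m-separation relations over them as `G`. -/
def Removable (G : MixedGraph V) (X : V) : Prop :=
  ∀ Y W : V, Y ≠ X → W ≠ X → Y ≠ W →
    ∀ Z : Set V, Z ⊆ {v | v ≠ X ∧ v ≠ Y ∧ v ≠ W} →
      (G.MSep Y W Z ↔ (G.induce {v | v ≠ X}).MSep Y W Z)

/-- Ancestral: no directed cycles, no almost directed cycles, and endpoints of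
undirected edges have no parents or spouses. -/
def Ancestral (G : MixedGraph V) : Prop :=
  (∀ x y, G.dir x y → ¬ G.anc y x) ∧
  (∀ x y, G.bi x y → ¬ G.anc y x) ∧
  (∀ x y, G.und x y → ∀ z, ¬ G.dir z x ∧ ¬ G.bi z x)

/-- A maximal ancestral graph: ancestral, and any two non-adjacent vertices are
m-separated by some set. -/
def IsMAG (G : MixedGraph V) : Prop :=
  G.Ancestral ∧
  ∀ x y, x ≠ y → ¬ G.adj x y →
    ∃ Z : Set V, Z ⊆ {v | v ≠ x ∧ v ≠ y} ∧ G.MSep x y Z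

/-- Markov boundary of `x`: the vertices with a collider path to `x`. -/
def Mb (G : MixedGraph V) (x : V) : Set V :=
  {y | ∃ p, G.IsColliderPath p ∧ p.head? = some y ∧ p.getLast? = some x}

/-- District of `x`: vertices joined to `x` by a path of bidirected edges. -/
def district (G : MixedGraph V) (x : V) : Set V :=
  {y | Relation.ReflTransGen G.bi x y}

/-- `Pa⁺(x) = Pa(x) ∪ Dis(x) ∪ Pa(Dis(x)) ∪ N(x)`. -/
def paPlus (G : MixedGraph V) (x : V) : Set V :=
  G.pa x ∪ G.district x ∪ (⋃ y ∈ G.district x, G.pa y) ∪ G.nbr x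

noncomputable def deltaPlus [Fintype V] (G : MixedGraph V) : ℕ :=
  Finset.univ.sup fun z : V => (G.paPlus z).ncard

/-- Condition 1 of the graphical characterization of removability. -/
def RemCond1 (G : MixedGraph V) (X : V) : Prop :=
  ∀ Y Z : V, G.adj X Y → Z ∈ G.child X ∪ G.nbr X → Z ≠ Y → G.adj Y Z

/-- Condition 2 of the graphical characterization of removability. -/
def RemCond2 (G : MixedGraph V) (X : V) : Prop :=
  ∀ (p : List V) (Y Z : V), G.IsColliderPath p → p.head? = some X →
    p.getLast? = some Y → Z ∉ p → (∀ v ∈ p.dropLast, G.dir v Z) → G.adj Y Z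

end MixedGraph

/-
Removability forces a shortcut `Y → Z` whenever `Y → X → Z`: otherwise `Y` and `Z` are
non-adjacent, and a set `S` m-separating them in the MAG `G` would, after deleting `X`,
still separate them in `H` (an m-connecting path of `H` avoids `X` and stays open in `G`),
but not in `G`, where `Y → X → Z` is open. Thanks to the shortcuts every directed path
between vertices other than `X` can bypass `X`, so `G` and `H` have the same ancestor
relation on `V \ {X}`; a path avoiding `X` has the same colliders in both graphs, so it is
m-connecting in one exactly when it is in the other.
-/

lemma List.IsChain.forall_mem_of_rel {α : Type*} {R : α → α → Prop} {P : α → Prop}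
    (hR : ∀ a b, R a b → P a ∧ P b) :
    ∀ {l : List α}, l.IsChain R → 2 ≤ l.length → ∀ v ∈ l, P v
  | a :: b :: l, h, _, v, hv => by
    rw [List.isChain_cons_cons] at h
    rcases List.mem_cons.1 hv with rfl | hv
    · exact (hR _ _ h.1).1
    · cases l with
      | nil => exact (List.mem_singleton.1 hv) ▸ (hR _ _ h.1).2
      | cons c l => exact forall_mem_of_rel hR h.2 (by simp) v hv

namespace MixedGraph

variable {V : Type*} {G : MixedGraph V}

section Induce

variable {S : Set V}

lemma adj_induce_iff {a b : V} : (G.induce S).adj a b ↔ G.adj a b ∧ a ∈ S ∧ b ∈ S := by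
  simp only [adj, induce]
  tauto

lemma head_induce_iff {a b : V} : (G.induce S).head a b ↔ G.head a b ∧ a ∈ S ∧ b ∈ S := by
  simp only [head, induce]
  tauto

lemma anc_of_anc_induce {a b : V} (h : (G.induce S).anc a b) : G.anc a b :=
  Relation.ReflTransGen.mono (fun _ _ h => h.1) _ _ h

lemma isPath_induce_iff {p : List V} :
    (G.induce S).IsPath p ↔ G.IsPath p ∧ ∀ v ∈ p, v ∈ S := by
  refine ⟨fun ⟨hc, hnd, hlen⟩ => ⟨⟨?_, hnd, hlen⟩, ?_⟩, fun ⟨⟨hc, hnd, hlen⟩, hS⟩ => ⟨?_, hnd, hlen⟩⟩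
  · exact List.IsChain.imp (fun _ _ h => (adj_induce_iff.1 h).1) hc
  · exact hc.forall_mem_of_rel (P := (· ∈ S)) (fun _ _ h => (adj_induce_iff.1 h).2) hlen
  · exact List.IsChain.imp_of_mem_imp (fun a b ha hb h => adj_induce_iff.2 ⟨h, hS a ha, hS b hb⟩) hc

lemma colliderAt_induce_iff {p : List V} (hp : ∀ v ∈ p, v ∈ S) (i : ℕ) :
    (G.induce S).ColliderAt p i ↔ G.ColliderAt p i := by
  have hS : ∀ {j w}, p[j]? = some w → w ∈ S := fun h => hp _ (List.mem_of_getElem? h)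
  constructor
  · rintro ⟨a, v, c, ha, hv, hc, hav, hcv⟩
    exact ⟨a, v, c, ha, hv, hc, (head_induce_iff.1 hav).1, (head_induce_iff.1 hcv).1⟩
  · rintro ⟨a, v, c, ha, hv, hc, hav, hcv⟩
    exact ⟨a, v, c, ha, hv, hc, head_induce_iff.2 ⟨hav, hS ha, hS hv⟩,
      head_induce_iff.2 ⟨hcv, hS hc, hS hv⟩⟩

lemma MConn.of_induce {p : List V} {x y : V} {Z : Set V} (h : (G.induce S).MConn p x y Z) :
    G.MConn p x y Z := by
  obtain ⟨⟨hpath, hx, hy⟩, hint⟩ := h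
  obtain ⟨hpath, hS⟩ := isPath_induce_iff.1 hpath
  refine ⟨⟨hpath, hx, hy⟩, fun i v h1 h2 hv => ?_⟩
  rw [← colliderAt_induce_iff hS]
  obtain ⟨hcol, hncol⟩ := hint i v h1 h2 hv
  exact ⟨fun hc => (hcol hc).imp fun _ ⟨ht, hanc⟩ => ⟨ht, anc_of_anc_induce hanc⟩, hncol⟩

lemma MConn.induce {p : List V} {x y : V} {Z : Set V} (h : G.MConn p x y Z)
    (hp : ∀ v ∈ p, v ∈ S) (hZ : Z ⊆ S)
    (hanc : ∀ a b, a ∈ S → b ∈ S → G.anc a b → (G.induce S).anc a b) :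
    (G.induce S).MConn p x y Z := by
  obtain ⟨⟨hpath, hx, hy⟩, hint⟩ := h
  have hxy : ({x, y} ∪ Z : Set V) ⊆ S := by
    rintro t ((rfl | rfl) | ht)
    exacts [hp t (List.mem_of_mem_head? hx), hp t (List.mem_of_mem_getLast? hy), hZ ht]
  refine ⟨⟨isPath_induce_iff.2 ⟨hpath, hp⟩, hx, hy⟩, fun i v h1 h2 hv => ?_⟩
  rw [colliderAt_induce_iff hp]
  obtain ⟨hcol, hncol⟩ := hint i v h1 h2 hv
  refine ⟨fun hc => ?_, hncol⟩
  obtain ⟨t, ht, hvt⟩ := hcol hc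
  exact ⟨t, ht, hanc v t (hp v (List.mem_of_getElem? hv)) (hxy ht) hvt⟩

end Induce

lemma MConn.mono {p : List V} {x y : V} {Z Z' : Set V} (h : G.MConn p x y Z) (hZ : Z ⊆ Z')
    (hp : ∀ v ∈ p, v ∈ Z' → v ∈ Z) : G.MConn p x y Z' := by
  refine ⟨h.1, fun i v h1 h2 hv => ?_⟩
  obtain ⟨hcol, hncol⟩ := h.2 i v h1 h2 hv
  refine ⟨fun hc => ?_, fun hc hvZ => hncol hc (hp v (List.mem_of_getElem? hv) hvZ)⟩
  obtain ⟨t, ht, hvt⟩ := hcol hc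
  exact ⟨t, Set.union_subset_union_right _ hZ ht, hvt⟩

lemma anc_induce_of_shortcut {X : V} (hsc : ∀ a b, G.dir a X → G.dir X b → G.dir a b)
    {v w : V} (h : G.anc v w) (hv : v ≠ X) (hw : w ≠ X) :
    (G.induce {t | t ≠ X}).anc v w := by
  -- the second clause reroutes a directed path entering `X` from `a` via the shortcut `a → c`
  suffices key : ∀ u, G.anc u w → (u ≠ X → (G.induce {t | t ≠ X}).anc u w) ∧
      (u = X → ∀ a, a ≠ X → G.dir a X → (G.induce {t | t ≠ X}).anc a w) from
    (key v h).1 hv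
  intro u hu
  induction hu using Relation.ReflTransGen.head_induction_on with
  | refl => exact ⟨fun _ => .refl, fun h => absurd h hw⟩
  | @head u c huc _ ih =>
    refine ⟨fun huX => ?_, fun huX a haX ha => ?_⟩
    · by_cases hcX : c = X
      · exact ih.2 hcX u huX (hcX ▸ huc)
      · exact .head ⟨huc, huX, hcX⟩ (ih.1 hcX)
    · by_cases hcX : c = X
      · exact ih.2 hcX a haX ha
      · exact .head ⟨hsc a c ha (huX ▸ huc), haX, hcX⟩ (ih.1 hcX)

namespace Ancestral

variable (hG : G.Ancestral)
include hG

lemma ne_of_dir {a b : V} (h : G.dir a b) : a ≠ b := by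
  rintro rfl
  exact hG.1 a a h .refl

lemma not_head_of_dir {a b : V} (h : G.dir a b) : ¬ G.head b a := by
  rintro (hba | hba)
  exacts [hG.1 b a hba (.single h), hG.2.1 b a hba (.single h)]

lemma mConn_dir_dir {Y X Z : V} (hYX : G.dir Y X) (hXZ : G.dir X Z) {S : Set V}
    (hX : X ∉ S) : G.MConn [Y, X, Z] Y Z S := by
  have hYZ : Y ≠ Z := fun h => hG.1 X Z hXZ (.single (h ▸ hYX))
  refine ⟨⟨⟨?_, ?_, by simp⟩, rfl, rfl⟩, fun i v h1 h2 hv => ?_⟩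
  · exact .cons_cons (Or.inl hYX) (.cons_cons (Or.inl hXZ) (.singleton Z))
  · simp [hG.ne_of_dir hYX, hYZ, hG.ne_of_dir hXZ]
  · obtain rfl : i = 1 := by simp at h2; omega
    obtain rfl : X = v := by simpa using hv
    refine ⟨fun ⟨_, _, c, _, hv', hc, _, hcv⟩ => ?_, fun _ => hX⟩
    obtain rfl : X = _ := by simpa using hv'
    obtain rfl : Z = c := by simpa using hc
    exact absurd hcv (hG.not_head_of_dir hXZ)

lemma dir_of_adj {X Y Z : V} (hYZ : G.adj Y Z) (hYX : G.dir Y X) (hXZ : G.dir X Z) :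
    G.dir Y Z := by
  have hanc : G.anc Y Z := .head hYX (.single hXZ)
  rcases hYZ with h | h | h | h
  · exact h
  · exact absurd hanc (hG.1 Z Y h)
  · exact absurd hanc (hG.2.1 Z Y (G.bi_symm Y Z h))
  · exact absurd hXZ (hG.2.2 Z Y (G.und_symm Y Z h) X).1

end Ancestral

lemma IsMAG.adj_of_removable (hG : G.IsMAG) {X Y Z : V} (hrem : G.Removable X)
    (hYX : G.dir Y X) (hXZ : G.dir X Z) : G.adj Y Z := by
  have hYne := hG.1.ne_of_dir hYX
  have hZne := (hG.1.ne_of_dir hXZ).symm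
  have hYZ : Y ≠ Z := fun h => hG.1.1 X Z hXZ (.single (h ▸ hYX))
  by_contra hadj
  obtain ⟨S, hS, hsep⟩ := hG.2 Y Z hYZ hadj
  have hsub : S \ {X} ⊆ {v | v ≠ X ∧ v ≠ Y ∧ v ≠ Z} :=
    fun v ⟨hvS, hvX⟩ => ⟨hvX, hS hvS⟩
  have hopen : ¬ G.MSep Y Z (S \ {X}) :=
    fun h => h _ (hG.1.mConn_dir_dir hYX hXZ fun h => h.2 rfl)
  rw [hrem Y Z hYne hZne hYZ _ hsub] at hopen
  obtain ⟨q, hq⟩ := not_forall_not.1 hopen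
  have hqX : ∀ v ∈ q, v ≠ X := (isPath_induce_iff.1 hq.1.1).2
  exact hsep q (hq.of_induce.mono Set.sdiff_subset fun v hv hvS => ⟨hvS, hqX v hv⟩)

lemma IsMAG.dir_of_removable (hG : G.IsMAG) {X Y Z : V} (hrem : G.Removable X)
    (hYX : G.dir Y X) (hXZ : G.dir X Z) : G.dir Y Z :=
  hG.1.dir_of_adj (hG.adj_of_removable hrem hYX hXZ) hYX hXZ

end MixedGraph

open MixedGraph in
/-- for a removable vertex `X` of a MAG `G` and a path `u` lying
in the induced subgraph `H` on `V \ {X}`, `u` is m-connecting relative to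
`W ⊆ V \ {X}` in `G` iff it is m-connecting relative to `W` in `H`. -/
theorem stmt7 {V : Type*} (G : MixedGraph V) (hG : G.IsMAG) (X : V)
    (hrem : G.Removable X) (u : List V) (x y : V) (W : Set V)
    (hu : ∀ v ∈ u, v ≠ X) (hW : ∀ w ∈ W, w ≠ X) :
    G.MConn u x y W ↔ (G.induce {v | v ≠ X}).MConn u x y W :=
  ⟨fun h => h.induce hu hW fun _ _ ha hb hab =>
      anc_induce_of_shortcut (fun _ _ => hG.dir_of_removable hrem) hab ha hb,
    MConn.of_induce⟩
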